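/- For the type B metric on ℝ⁴ with μ ≠ 0, there is no smooth function f : ℝ⁴ → ℝ such that grad(f) satisfies the Ricci soliton equation L_{grad f} g + ρ = λ g for any real λ; i.e., the type B metric is never a gradient Ricci soliton. -/

import Mathlib

open Real

noncomputable def pd {n : ℕ} (i : Fin n) (f : (Fin n → ℝ) → ℝ) (p : Fin n → ℝ) : ℝ :=
  fderiv ℝ f p (Pi.single i 1)

noncomputable def gB (μ : ℝ) (p : Fin 4 → ℝ) : Matrix (Fin 4) (Fin 4) ℝ :=
  Matrix.of
    ![![μ, μ/2, exp (-p 0) / 2, exp (-p 1)],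
      ![μ/2, μ, exp (-p 0), exp (-p 1) / 2],
      ![exp (-p 0) / 2, exp (-p 0), 0, 0],
      ![exp (-p 1), exp (-p 1) / 2, 0, 0]]

noncomputable def ρB : Matrix (Fin 4) (Fin 4) ℝ :=
  Matrix.of
    ![![-4/3, -2/3, 0, 0], ![-2/3, -4/3, 0, 0], ![0, 0, 0, 0], ![0, 0, 0, 0]]

noncomputable def lieD {n : ℕ} (g : (Fin n → ℝ) → Matrix (Fin n) (Fin n) ℝ)
    (X : Fin n → (Fin n → ℝ) → ℝ) (i j : Fin n) (p : Fin n → ℝ) : ℝ :=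
  (∑ k, X k p * pd k (fun q => g q i j) p)
    + (∑ k, g p k j * pd i (X k) p) + (∑ k, g p i k * pd j (X k) p)

/-! ### auxiliary partial-derivative calculus -/

theorem pd_const {n : ℕ} (i : Fin n) (c : ℝ) (p : Fin n → ℝ) : pd i (fun _ => c) p = 0 := by
  simp [pd]

theorem pd_add {n : ℕ} (i : Fin n) {F G : (Fin n → ℝ) → ℝ} {p}
    (hF : DifferentiableAt ℝ F p) (hG : DifferentiableAt ℝ G p) :
    pd i (fun q => F q + G q) p = pd i F p + pd i G p := by
  simp [pd, fderiv_fun_add hF hG]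

theorem pd_sub {n : ℕ} (i : Fin n) {F G : (Fin n → ℝ) → ℝ} {p}
    (hF : DifferentiableAt ℝ F p) (hG : DifferentiableAt ℝ G p) :
    pd i (fun q => F q - G q) p = pd i F p - pd i G p := by
  simp [pd, fderiv_fun_sub hF hG]

theorem pd_mul {n : ℕ} (i : Fin n) {F G : (Fin n → ℝ) → ℝ} {p}
    (hF : DifferentiableAt ℝ F p) (hG : DifferentiableAt ℝ G p) :
    pd i (fun q => F q * G q) p = pd i F p * G p + F p * pd i G p := by
  simp [pd, fderiv_fun_mul hF hG]; ring

theorem pd_div_const {n : ℕ} (i : Fin n) (c : ℝ) {F : (Fin n → ℝ) → ℝ} {p}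
    (hF : DifferentiableAt ℝ F p) :
    pd i (fun q => F q / c) p = pd i F p / c := by
  have h : (fun q => F q / c) = (fun q => F q * c⁻¹) := by funext q; ring
  rw [h]
  simp [pd, fderiv_mul_const hF, div_eq_mul_inv, mul_comm]

theorem pd_exp {n : ℕ} (i j : Fin n) (p : Fin n → ℝ) :
    pd i (fun q => Real.exp (-q j)) p
      = -((Pi.single i 1 : Fin n → ℝ) j) * Real.exp (-p j) := by
  have h1 : HasFDerivAt (fun q : Fin n → ℝ => -q j)
      (-(ContinuousLinearMap.proj j) : (Fin n → ℝ) →L[ℝ] ℝ) p :=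
    ((ContinuousLinearMap.proj j : (Fin n → ℝ) →L[ℝ] ℝ).hasFDerivAt).neg
  have h2 := (Real.hasDerivAt_exp (-p j)).comp_hasFDerivAt p h1
  have h3 : HasFDerivAt (fun q : Fin n → ℝ => Real.exp (-q j))
      (Real.exp (-p j) • -(ContinuousLinearMap.proj j)) p := h2
  rw [pd, h3.fderiv]
  simp [mul_comm]

theorem pd_congr {n : ℕ} (i : Fin n) {F G : (Fin n → ℝ) → ℝ}
    (h : ∀ q, F q = G q) (p : Fin n → ℝ) : pd i F p = pd i G p := by
  have hFG : F = G := funext h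
  rw [hFG]

theorem contDiff_pd {n : ℕ} (i : Fin n) {F : (Fin n → ℝ) → ℝ}
    (hF : ContDiff ℝ (⊤ : ℕ∞) F) : ContDiff ℝ (⊤ : ℕ∞) (pd i F) := by
  have h : ContDiff ℝ (⊤ : ℕ∞) (fderiv ℝ F) := hF.fderiv_right (by simp)
  exact (ContinuousLinearMap.apply ℝ ℝ (Pi.single i 1 : Fin n → ℝ)).contDiff.comp h

theorem pd_comm {n : ℕ} (i j : Fin n) {F : (Fin n → ℝ) → ℝ}
    (hF : ContDiff ℝ (⊤ : ℕ∞) F) (p : Fin n → ℝ) :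
    pd i (pd j F) p = pd j (pd i F) p := by
  have hsymm : IsSymmSndFDerivAt ℝ F p := hF.contDiffAt.isSymmSndFDerivAt (by rw [minSmoothness_of_isRCLikeNormedField]; exact WithTop.coe_le_coe.mpr le_top)
  have hd : DifferentiableAt ℝ (fderiv ℝ F) p :=
    ((hF.fderiv_right (by simp) : ContDiff ℝ (⊤ : ℕ∞) (fderiv ℝ F)).differentiable (by simp)) p
  have key : ∀ v w : Fin n → ℝ,
      fderiv ℝ (fun q => fderiv ℝ F q v) p w = fderiv ℝ (fderiv ℝ F) p w v := by
    intro v w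
    have h : (fun q => fderiv ℝ F q v)
        = (ContinuousLinearMap.apply ℝ ℝ v) ∘ (fderiv ℝ F) := rfl
    rw [h, fderiv_comp p (ContinuousLinearMap.apply ℝ ℝ v).differentiableAt hd]
    simp
  show fderiv ℝ (fun q => fderiv ℝ F q (Pi.single j 1)) p (Pi.single i 1)
      = fderiv ℝ (fun q => fderiv ℝ F q (Pi.single i 1)) p (Pi.single j 1)
  rw [key, key, hsymm]

theorem pd_e0 (i : Fin 4) (p : Fin 4 → ℝ) :
    pd i (fun q => Real.exp (-q 0)) p
      = -((Pi.single i 1 : Fin 4 → ℝ) 0) * Real.exp (-p 0) := pd_exp i 0 p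

theorem pd_e1 (i : Fin 4) (p : Fin 4 → ℝ) :
    pd i (fun q => Real.exp (-q 1)) p
      = -((Pi.single i 1 : Fin 4 → ℝ) 1) * Real.exp (-p 1) := pd_exp i 1 p

theorem pd_e0h (i : Fin 4) (p : Fin 4 → ℝ) :
    pd i (fun q => Real.exp (-q 0) / 2) p
      = -((Pi.single i 1 : Fin 4 → ℝ) 0) * Real.exp (-p 0) / 2 := by
  rw [pd_div_const i 2 (by fun_prop), pd_e0]

theorem pd_e1h (i : Fin 4) (p : Fin 4 → ℝ) :
    pd i (fun q => Real.exp (-q 1) / 2) p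
      = -((Pi.single i 1 : Fin 4 → ℝ) 1) * Real.exp (-p 1) / 2 := by
  rw [pd_div_const i 2 (by fun_prop), pd_e1]

/-- entries of `gB` -/
theorem g00 (μ : ℝ) (p : Fin 4 → ℝ) : gB μ p 0 0 = μ := rfl
theorem g01 (μ : ℝ) (p : Fin 4 → ℝ) : gB μ p 0 1 = μ/2 := rfl
theorem g02 (μ : ℝ) (p : Fin 4 → ℝ) : gB μ p 0 2 = exp (-p 0) / 2 := rfl
theorem g03 (μ : ℝ) (p : Fin 4 → ℝ) : gB μ p 0 3 = exp (-p 1) := rfl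
theorem g10 (μ : ℝ) (p : Fin 4 → ℝ) : gB μ p 1 0 = μ/2 := rfl
theorem g11 (μ : ℝ) (p : Fin 4 → ℝ) : gB μ p 1 1 = μ := rfl
theorem g12 (μ : ℝ) (p : Fin 4 → ℝ) : gB μ p 1 2 = exp (-p 0) := rfl
theorem g13 (μ : ℝ) (p : Fin 4 → ℝ) : gB μ p 1 3 = exp (-p 1) / 2 := rfl
theorem g20 (μ : ℝ) (p : Fin 4 → ℝ) : gB μ p 2 0 = exp (-p 0) / 2 := rfl
theorem g21 (μ : ℝ) (p : Fin 4 → ℝ) : gB μ p 2 1 = exp (-p 0) := rfl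
theorem g22 (μ : ℝ) (p : Fin 4 → ℝ) : gB μ p 2 2 = 0 := rfl
theorem g23 (μ : ℝ) (p : Fin 4 → ℝ) : gB μ p 2 3 = 0 := rfl
theorem g30 (μ : ℝ) (p : Fin 4 → ℝ) : gB μ p 3 0 = exp (-p 1) := rfl
theorem g31 (μ : ℝ) (p : Fin 4 → ℝ) : gB μ p 3 1 = exp (-p 1) / 2 := rfl
theorem g32 (μ : ℝ) (p : Fin 4 → ℝ) : gB μ p 3 2 = 0 := rfl
theorem g33 (μ : ℝ) (p : Fin 4 → ℝ) : gB μ p 3 3 = 0 := rfl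

theorem r00 : ρB 0 0 = -4/3 := rfl
theorem r01 : ρB 0 1 = -2/3 := rfl
theorem r02 : ρB 0 2 = 0 := rfl
theorem r03 : ρB 0 3 = 0 := rfl
theorem r11 : ρB 1 1 = -4/3 := rfl
theorem r12 : ρB 1 2 = 0 := rfl
theorem r13 : ρB 1 3 = 0 := rfl

theorem exp_factor_zero {t x : ℝ} (h : Real.exp t * x = 0) : x = 0 := by
  rcases mul_eq_zero.1 h with h' | h'
  · exact absurd h' (Real.exp_ne_zero t)
  · exact h'
/-- The type B metric with μ ≠ 0 is never a gradient Ricci soliton: there is no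
smooth f such that X = grad f (characterized by g(X,·) = df) satisfies
L_X g + ρ = λ g for some λ. -/
theorem no_gradient_soliton_typeB (μ : ℝ) (hμ : μ ≠ 0) :
    ¬ ∃ (f : (Fin 4 → ℝ) → ℝ) (lam : ℝ) (X : Fin 4 → (Fin 4 → ℝ) → ℝ),
      ContDiff ℝ (⊤ : ℕ∞) f ∧ (∀ k, ContDiff ℝ (⊤ : ℕ∞) (X k)) ∧
      (∀ p : Fin 4 → ℝ, ∀ i : Fin 4, (∑ j, gB μ p i j * X j p) = pd i f p) ∧
      (∀ p : Fin 4 → ℝ, ∀ i j : Fin 4,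
        lieD (gB μ) X i j p + ρB i j = lam * gB μ p i j) := by
  rintro ⟨f, lam, X, hf, hX, hgrad, hsol⟩
  have hXd : ∀ k, Differentiable ℝ (X k) := fun k => (hX k).differentiable (by simp)
  have hdX : ∀ (i : Fin 4) k, Differentiable ℝ (pd i (X k)) :=
    fun i k => (contDiff_pd i (hX k)).differentiable (by simp)
  -- the one-form g(X,·) = df, componentwise
  have hw0 : ∀ q, pd 0 f q
      = μ * X 0 q + μ/2 * X 1 q + exp (-q 0)/2 * X 2 q + exp (-q 1) * X 3 q := by
    intro q
    have h := hgrad q 0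
    rw [Fin.sum_univ_four, g00, g01, g02, g03] at h
    linear_combination -h
  have hw1 : ∀ q, pd 1 f q
      = μ/2 * X 0 q + μ * X 1 q + exp (-q 0) * X 2 q + exp (-q 1)/2 * X 3 q := by
    intro q
    have h := hgrad q 1
    rw [Fin.sum_univ_four, g10, g11, g12, g13] at h
    linear_combination -h
  have hw2 : ∀ q, pd 2 f q = exp (-q 0)/2 * X 0 q + exp (-q 0) * X 1 q := by
    intro q
    have h := hgrad q 2
    rw [Fin.sum_univ_four, g20, g21, g22, g23] at h
    linear_combination -h
  have hw3 : ∀ q, pd 3 f q = exp (-q 1) * X 0 q + exp (-q 1)/2 * X 1 q := by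
    intro q
    have h := hgrad q 3
    rw [Fin.sum_univ_four, g30, g31, g32, g33] at h
    linear_combination -h
  -- closedness of the one-form: expanded mixed-partial identities
  have c02 : ∀ p, μ * pd 2 (X 0) p + μ/2 * pd 2 (X 1) p + exp (-p 0)/2 * pd 2 (X 2) p
        + exp (-p 1) * pd 2 (X 3) p
      = -(exp (-p 0)/2) * X 0 p + exp (-p 0)/2 * pd 0 (X 0) p
        - exp (-p 0) * X 1 p + exp (-p 0) * pd 0 (X 1) p := by
    intro p
    have h : pd 2 (fun q => μ * X 0 q + μ/2 * X 1 q + exp (-q 0)/2 * X 2 q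
          + exp (-q 1) * X 3 q) p
        = pd 0 (fun q => exp (-q 0)/2 * X 0 q + exp (-q 0) * X 1 q) p := by
      rw [pd_congr 2 (fun q => (hw0 q).symm) p, pd_congr 0 (fun q => (hw2 q).symm) p]
      exact pd_comm 2 0 hf p
    simp (disch := fun_prop) only [pd_add, pd_mul, pd_const, pd_e0, pd_e0h, pd_e1, pd_e1h,
      Pi.single_apply, Fin.reduceEq, reduceIte] at h
    linear_combination h
  have c12 : ∀ p, μ/2 * pd 2 (X 0) p + μ * pd 2 (X 1) p + exp (-p 0) * pd 2 (X 2) p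
        + exp (-p 1)/2 * pd 2 (X 3) p
      = exp (-p 0)/2 * pd 1 (X 0) p + exp (-p 0) * pd 1 (X 1) p := by
    intro p
    have h : pd 2 (fun q => μ/2 * X 0 q + μ * X 1 q + exp (-q 0) * X 2 q
          + exp (-q 1)/2 * X 3 q) p
        = pd 1 (fun q => exp (-q 0)/2 * X 0 q + exp (-q 0) * X 1 q) p := by
      rw [pd_congr 2 (fun q => (hw1 q).symm) p, pd_congr 1 (fun q => (hw2 q).symm) p]
      exact pd_comm 2 1 hf p
    simp (disch := fun_prop) only [pd_add, pd_mul, pd_const, pd_e0, pd_e0h, pd_e1, pd_e1h,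
      Pi.single_apply, Fin.reduceEq, reduceIte] at h
    linear_combination h
  have c03 : ∀ p, μ * pd 3 (X 0) p + μ/2 * pd 3 (X 1) p + exp (-p 0)/2 * pd 3 (X 2) p
        + exp (-p 1) * pd 3 (X 3) p
      = exp (-p 1) * pd 0 (X 0) p + exp (-p 1)/2 * pd 0 (X 1) p := by
    intro p
    have h : pd 3 (fun q => μ * X 0 q + μ/2 * X 1 q + exp (-q 0)/2 * X 2 q
          + exp (-q 1) * X 3 q) p
        = pd 0 (fun q => exp (-q 1) * X 0 q + exp (-q 1)/2 * X 1 q) p := by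
      rw [pd_congr 3 (fun q => (hw0 q).symm) p, pd_congr 0 (fun q => (hw3 q).symm) p]
      exact pd_comm 3 0 hf p
    simp (disch := fun_prop) only [pd_add, pd_mul, pd_const, pd_e0, pd_e0h, pd_e1, pd_e1h,
      Pi.single_apply, Fin.reduceEq, reduceIte] at h
    linear_combination h
  have c13 : ∀ p, μ/2 * pd 3 (X 0) p + μ * pd 3 (X 1) p + exp (-p 0) * pd 3 (X 2) p
        + exp (-p 1)/2 * pd 3 (X 3) p
      = -(exp (-p 1)) * X 0 p + exp (-p 1) * pd 1 (X 0) p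
        - exp (-p 1)/2 * X 1 p + exp (-p 1)/2 * pd 1 (X 1) p := by
    intro p
    have h : pd 3 (fun q => μ/2 * X 0 q + μ * X 1 q + exp (-q 0) * X 2 q
          + exp (-q 1)/2 * X 3 q) p
        = pd 1 (fun q => exp (-q 1) * X 0 q + exp (-q 1)/2 * X 1 q) p := by
      rw [pd_congr 3 (fun q => (hw1 q).symm) p, pd_congr 1 (fun q => (hw3 q).symm) p]
      exact pd_comm 3 1 hf p
    simp (disch := fun_prop) only [pd_add, pd_mul, pd_const, pd_e0, pd_e0h, pd_e1, pd_e1h,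
      Pi.single_apply, Fin.reduceEq, reduceIte] at h
    linear_combination h
  -- the four key first-order relations
  have relI : ∀ p, pd 0 (X 0) p + 2 * pd 0 (X 1) p - X 0 p - X 1 p - lam/2 = 0 := by
    intro p
    have h := hsol p 0 2
    simp only [lieD, Fin.sum_univ_four, g00, g01, g02, g03, g10, g11, g12, g13,
      g20, g21, g22, g23, g30, g31, g32, g33, r02, pd_const, pd_e0, pd_e0h, pd_e1, pd_e1h,
      Pi.single_apply, Fin.reduceEq, reduceIte] at h
    exact exp_factor_zero (t := -p 0) (by linear_combination h - c02 p)
  have relII : ∀ p, pd 1 (X 0) p + 2 * pd 1 (X 1) p - X 0 p - lam = 0 := by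
    intro p
    have h := hsol p 1 2
    simp only [lieD, Fin.sum_univ_four, g00, g01, g02, g03, g10, g11, g12, g13,
      g20, g21, g22, g23, g30, g31, g32, g33, r12, pd_const, pd_e0, pd_e0h, pd_e1, pd_e1h,
      Pi.single_apply, Fin.reduceEq, reduceIte] at h
    exact exp_factor_zero (t := -p 0) (by linear_combination h - c12 p)
  have relIII : ∀ p, 2 * pd 0 (X 0) p + pd 0 (X 1) p - X 1 p - lam = 0 := by
    intro p
    have h := hsol p 0 3
    simp only [lieD, Fin.sum_univ_four, g00, g01, g02, g03, g10, g11, g12, g13,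
      g20, g21, g22, g23, g30, g31, g32, g33, r03, pd_const, pd_e0, pd_e0h, pd_e1, pd_e1h,
      Pi.single_apply, Fin.reduceEq, reduceIte] at h
    exact exp_factor_zero (t := -p 1) (by linear_combination h - c03 p)
  have relIV : ∀ p, 2 * pd 1 (X 0) p + pd 1 (X 1) p - X 0 p - X 1 p - lam/2 = 0 := by
    intro p
    have h := hsol p 1 3
    simp only [lieD, Fin.sum_univ_four, g00, g01, g02, g03, g10, g11, g12, g13,
      g20, g21, g22, g23, g30, g31, g32, g33, r13, pd_const, pd_e0, pd_e0h, pd_e1, pd_e1h,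
      Pi.single_apply, Fin.reduceEq, reduceIte] at h
    exact exp_factor_zero (t := -p 1) (by linear_combination h - c13 p)
  -- solve for the first derivatives of X 0, X 1
  have hA0f : ∀ q, pd 0 (X 0) q = lam/2 + (X 1 q - X 0 q)/3 := by
    intro q; linarith [relI q, relIII q]
  have hB0f : ∀ q, pd 0 (X 1) q = (2 * X 0 q + X 1 q)/3 := by
    intro q; linarith [relI q, relIII q]
  have hA1f : ∀ q, pd 1 (X 0) q = (X 0 q + 2 * X 1 q)/3 := by
    intro q; linarith [relII q, relIV q]
  have hB1f : ∀ q, pd 1 (X 1) q = lam/2 + (X 0 q - X 1 q)/3 := by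
    intro q; linarith [relII q, relIV q]
  -- second-order symmetry forces X 0 = X 1 = 0
  have key1 : ∀ p, X 0 p + 2 * X 1 p = 0 := by
    intro p
    have e1 := pd_congr 1 hA0f p
    simp (disch := fun_prop) only [pd_add, pd_sub, pd_div_const, pd_const] at e1
    have e2 := pd_congr 0 hA1f p
    simp (disch := fun_prop) only [pd_add, pd_sub, pd_div_const, pd_const, pd_mul] at e2
    have sy := pd_comm 1 0 (hX 0) p
    linarith [e1, e2, sy, hA0f p, hB0f p, hA1f p, hB1f p]
  have key2 : ∀ p, 2 * X 0 p + X 1 p = 0 := by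
    intro p
    have e1 := pd_congr 1 hB0f p
    simp (disch := fun_prop) only [pd_add, pd_sub, pd_div_const, pd_const, pd_mul] at e1
    have e2 := pd_congr 0 hB1f p
    simp (disch := fun_prop) only [pd_add, pd_sub, pd_div_const, pd_const] at e2
    have sy := pd_comm 1 0 (hX 1) p
    linarith [e1, e2, sy, hA0f p, hB0f p, hA1f p, hB1f p]
  have hA : ∀ q, X 0 q = 0 := fun q => by linarith [key1 q, key2 q]
  have hB : ∀ q, X 1 q = 0 := fun q => by linarith [key1 q, key2 q]
  have pz0 : ∀ (i : Fin 4) p, pd i (X 0) p = 0 :=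
    fun i p => (pd_congr i hA p).trans (pd_const i 0 p)
  have pz1 : ∀ (i : Fin 4) p, pd i (X 1) p = 0 :=
    fun i p => (pd_congr i hB p).trans (pd_const i 0 p)
  have hlam : lam = 0 := by
    have h := hA0f (fun _ => 0)
    rw [pz0, hA, hB] at h
    linarith
  -- set up u = e^{-x} X2, w = e^{-y} X3
  obtain ⟨U, hU⟩ : ∃ U : (Fin 4 → ℝ) → ℝ, U = fun q => exp (-q 0) * X 2 q := ⟨_, rfl⟩
  obtain ⟨W, hW⟩ : ∃ W : (Fin 4 → ℝ) → ℝ, W = fun q => exp (-q 1) * X 3 q := ⟨_, rfl⟩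
  have hpe : ∀ j : Fin 4, ContDiff ℝ (⊤ : ℕ∞) (fun q : Fin 4 → ℝ => exp (-q j)) := fun j =>
    Real.contDiff_exp.comp
      ((ContinuousLinearMap.proj (R := ℝ) (φ := fun _ : Fin 4 => ℝ) j).contDiff.neg)
  have hUc : ContDiff ℝ (⊤ : ℕ∞) U := by rw [hU]; exact (hpe 0).mul (hX 2)
  have hWc : ContDiff ℝ (⊤ : ℕ∞) W := by rw [hW]; exact (hpe 1).mul (hX 3)
  have hUd : Differentiable ℝ U := hUc.differentiable (by simp)
  have hWd : Differentiable ℝ W := hWc.differentiable (by simp)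
  have hdU : ∀ i : Fin 4, Differentiable ℝ (pd i U) :=
    fun i => (contDiff_pd i hUc).differentiable (by simp)
  have hdW : ∀ i : Fin 4, Differentiable ℝ (pd i W) :=
    fun i => (contDiff_pd i hWc).differentiable (by simp)
  have hUp : ∀ p, U p = exp (-p 0) * X 2 p := fun p => by rw [hU]
  have hWp : ∀ p, W p = exp (-p 1) * X 3 p := fun p => by rw [hW]
  have hpdU0 : ∀ p, pd 0 U p = -(exp (-p 0) * X 2 p) + exp (-p 0) * pd 0 (X 2) p := by
    intro p
    rw [hU]
    simp (disch := fun_prop) only [pd_mul, pd_e0, Pi.single_apply, Fin.reduceEq, reduceIte]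
    ring
  have hpdU1 : ∀ p, pd 1 U p = exp (-p 0) * pd 1 (X 2) p := by
    intro p
    rw [hU]
    simp (disch := fun_prop) only [pd_mul, pd_e0, Pi.single_apply, Fin.reduceEq, reduceIte]
    ring
  have hpdW0 : ∀ p, pd 0 W p = exp (-p 1) * pd 0 (X 3) p := by
    intro p
    rw [hW]
    simp (disch := fun_prop) only [pd_mul, pd_e1, Pi.single_apply, Fin.reduceEq, reduceIte]
    ring
  have hpdW1 : ∀ p, pd 1 W p = -(exp (-p 1) * X 3 p) + exp (-p 1) * pd 1 (X 3) p := by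
    intro p
    rw [hW]
    simp (disch := fun_prop) only [pd_mul, pd_e1, Pi.single_apply, Fin.reduceEq, reduceIte]
    ring
  -- remaining soliton equations, in terms of U and W
  have hP : ∀ p, pd 0 U p + U p + 2 * pd 0 W p = 4/3 := by
    intro p
    have h := hsol p 0 0
    simp only [lieD, Fin.sum_univ_four, g00, g01, g02, g03, g10, g11, g12, g13,
      g20, g21, g22, g23, g30, g31, g32, g33, r00, pd_const, pd_e0, pd_e0h, pd_e1, pd_e1h,
      Pi.single_apply, Fin.reduceEq, reduceIte] at h
    simp only [pz0, pz1, hlam] at h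
    linear_combination h + hpdU0 p + hUp p + 2 * hpdW0 p
  have hQ : ∀ p, 2 * pd 1 U p + pd 1 W p + W p = 4/3 := by
    intro p
    have h := hsol p 1 1
    simp only [lieD, Fin.sum_univ_four, g00, g01, g02, g03, g10, g11, g12, g13,
      g20, g21, g22, g23, g30, g31, g32, g33, r11, pd_const, pd_e0, pd_e0h, pd_e1, pd_e1h,
      Pi.single_apply, Fin.reduceEq, reduceIte] at h
    simp only [pz0, pz1, hlam] at h
    linear_combination h + 2 * hpdU1 p + hpdW1 p + hWp p
  have hRS : ∀ p, (pd 0 U p + U p) + pd 0 W p / 2 + pd 1 U p / 2 + (pd 1 W p + W p)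
      = 2/3 := by
    intro p
    have h := hsol p 0 1
    simp only [lieD, Fin.sum_univ_four, g00, g01, g02, g03, g10, g11, g12, g13,
      g20, g21, g22, g23, g30, g31, g32, g33, r01, pd_const, pd_e0, pd_e0h, pd_e1, pd_e1h,
      Pi.single_apply, Fin.reduceEq, reduceIte] at h
    simp only [pz0, pz1, hlam] at h
    linear_combination h + hpdU0 p + hUp p + (1/2) * hpdW0 p + (1/2) * hpdU1 p
      + hpdW1 p + hWp p
  -- closedness in the (x,y) directions, with X0 = X1 = 0
  have h4 : ∀ p, pd 0 U p + pd 0 W p / 2 = pd 1 U p / 2 + pd 1 W p := by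
    intro p
    have hw1' : ∀ q, pd 1 f q = exp (-q 0) * X 2 q + exp (-q 1) * X 3 q / 2 := by
      intro q; linear_combination hw1 q + μ/2 * hA q + μ * hB q
    have hw0' : ∀ q, pd 0 f q = exp (-q 0) * X 2 q / 2 + exp (-q 1) * X 3 q := by
      intro q; linear_combination hw0 q + μ * hA q + μ/2 * hB q
    have h : pd 0 (fun q => exp (-q 0) * X 2 q + exp (-q 1) * X 3 q / 2) p
        = pd 1 (fun q => exp (-q 0) * X 2 q / 2 + exp (-q 1) * X 3 q) p := by
      rw [pd_congr 0 (fun q => (hw1' q).symm) p, pd_congr 1 (fun q => (hw0' q).symm) p]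
      exact pd_comm 0 1 hf p
    simp (disch := fun_prop) only [pd_add, pd_mul, pd_div_const, pd_const, pd_e0, pd_e1,
      Pi.single_apply, Fin.reduceEq, reduceIte] at h
    linear_combination h + hpdU0 p + hUp p - hUp p + (1/2) * hpdW0 p - (1/2) * hpdU1 p
      - hpdW1 p
  -- linear consequences
  have hstar : ∀ p, pd 1 U p + pd 0 W p = 4/3 := by
    intro p; linarith [hP p, hQ p, hRS p]
  have hw1e : ∀ p, pd 1 W p = pd 0 U p - pd 1 U p + 2/3 := by
    intro p; linarith [h4 p, hstar p]
  have hwe : ∀ q, W q = 2/3 - pd 0 U q - pd 1 U q := by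
    intro q; linarith [hQ q, hw1e q]
  have h1' : ∀ q, pd 0 U q + U q - 2 * pd 1 U q = -4/3 := by
    intro q; linarith [hP q, hstar q]
  -- differentiate those identities
  have d5 : ∀ p, pd 0 W p = 0 - pd 0 (pd 0 U) p - pd 0 (pd 1 U) p := by
    intro p
    have h := pd_congr 0 hwe p
    simp (disch := fun_prop) only [pd_sub, pd_const] at h
    exact h
  have d6 : ∀ p, pd 1 W p = 0 - pd 1 (pd 0 U) p - pd 1 (pd 1 U) p := by
    intro p
    have h := pd_congr 1 hwe p
    simp (disch := fun_prop) only [pd_sub, pd_const] at h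
    exact h
  have d7 : ∀ p, pd 0 (pd 0 U) p + pd 0 U p - 2 * pd 0 (pd 1 U) p = 0 := by
    intro p
    have h := pd_congr 0 h1' p
    simp (disch := fun_prop) only [pd_add, pd_sub, pd_mul, pd_const] at h
    linarith [h]
  have d8 : ∀ p, pd 1 (pd 0 U) p + pd 1 U p - 2 * pd 1 (pd 1 U) p = 0 := by
    intro p
    have h := pd_congr 1 h1' p
    simp (disch := fun_prop) only [pd_add, pd_sub, pd_mul, pd_const] at h
    linarith [h]
  have sy : ∀ p, pd 0 (pd 1 U) p = pd 1 (pd 0 U) p := pd_comm 0 1 hUc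
  have hu0 : ∀ p, pd 0 U p = 0 := by
    intro p
    linarith [d5 p, d6 p, d7 p, d8 p, sy p, hstar p, hw1e p]
  have hz : ∀ (i : Fin 4) p, pd i (pd 0 U) p = 0 :=
    fun i p => (pd_congr i hu0 p).trans (pd_const i 0 p)
  have hu1 : ∀ p, pd 1 U p = 4/3 := by
    intro p
    linarith [d5 p, hz 0 p, hz 1 p, sy p, hstar p]
  have h11 : ∀ p, pd 1 (pd 1 U) p = 0 :=
    fun p => (pd_congr 1 hu1 p).trans (pd_const 1 (4/3) p)
  have p0 : Fin 4 → ℝ := fun _ => 0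
  linarith [d8 p0, hz 1 p0, hu1 p0, h11 p0]
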